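/- Let A be a finite set, 3 ≤ h ≤ |A|, and let ρ ⊆ A^h be an h-regularly generated relation on A. Then Pol(ρ) is a maximal clone on A. -/
import Mathlib


/-- An `n`-ary operation on `A`. -/
abbrev Op (A : Type*) (n : ℕ) : Type _ := (Fin n → A) → A

/-- A family of sets of finitary operations is a clone if it contains all projections
and is closed under composition. -/
def IsClone {A : Type*} (C : ∀ n, Set (Op A n)) : Prop :=
  (∀ (n : ℕ) (i : Fin n), (fun v : Fin n → A => v i) ∈ C n) ∧
  (∀ (n k : ℕ) (f : Op A n) (g : Fin n → Op A k),
    f ∈ C n → (∀ i, g i ∈ C k) → (fun v : Fin k → A => f (fun i => g i v)) ∈ C k)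

/-- A clone is maximal if it is proper and any clone containing it is itself or everything. -/
def IsMaximalClone {A : Type*} (C : ∀ n, Set (Op A n)) : Prop :=
  IsClone C ∧ C ≠ (fun _ => Set.univ) ∧
  ∀ D : ∀ n, Set (Op A n), IsClone D → (∀ n, C n ⊆ D n) →
    D = C ∨ D = (fun _ => Set.univ)

/-- An `n`-ary operation preserves an `h`-ary relation `ρ`. -/
def Preserves {A : Type*} {n h : ℕ} (f : Op A n) (ρ : Set (Fin h → A)) : Prop :=
  ∀ r : Fin n → Fin h → A, (∀ i, r i ∈ ρ) → (fun j : Fin h => f (fun i => r i j)) ∈ ρ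

/-- The polymorphism clone of a relation. -/
def Pol {A : Type*} {h : ℕ} (ρ : Set (Fin h → A)) : ∀ n, Set (Op A n) :=
  fun n => {f | Preserves f ρ}

/-- The relation `ω_λ` on `h^λ`: in every coordinate the `h` values are not pairwise distinct. -/
def omegaRel (h lam : ℕ) : Set (Fin h → (Fin lam → Fin h)) :=
  {b | ∀ r : Fin lam, ∃ i j : Fin h, i ≠ j ∧ b i r = b j r}

/-- An `h`-regularly generated relation: the preimage of `ω_λ` under a surjection `A → h^λ`. -/
def IsRegularlyGenerated {A : Type*} [Fintype A] {h : ℕ} (ρ : Set (Fin h → A)) : Prop :=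
  3 ≤ h ∧ h ≤ Fintype.card A ∧
  ∃ lam : ℕ, 1 ≤ lam ∧ ∃ φ : A → Fin lam → Fin h,
    Function.Surjective φ ∧
    ρ = {v | (fun i => φ (v i)) ∈ omegaRel h lam}

private lemma mem_rho {A : Type*} {h lam : ℕ} (φ : A → Fin lam → Fin h) {ρ : Set (Fin h → A)}
    (hρ : ρ = {v | (fun i => φ (v i)) ∈ omegaRel h lam}) (v : Fin h → A) :
    v ∈ ρ ↔ ∀ r : Fin lam, ∃ i j : Fin h, i ≠ j ∧ φ (v i) r = φ (v j) r := by
  subst hρ; exact Iff.rfl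

private lemma pol_isClone {A : Type*} {h : ℕ} (ρ : Set (Fin h → A)) : IsClone (Pol ρ) := by
  constructor
  · intro n i
    show Preserves (fun v : Fin n → A => v i) ρ
    intro M hM
    exact hM i
  · intro n k f gs hf hgs
    show Preserves (fun v : Fin k → A => f (fun i => gs i v)) ρ
    intro M hM
    exact hf (fun i j => gs i (fun t => M t j)) (fun i => hgs i M hM)

/-- Pigeonhole: an operation whose `φ`-coordinate functions are all non-surjective
preserves `ρ`. -/
private lemma polN {A : Type*} {h lam : ℕ} (φ : A → Fin lam → Fin h)
    {ρ : Set (Fin h → A)} (hρ : ρ = {v | (fun i => φ (v i)) ∈ omegaRel h lam})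
    {n : ℕ} (f : Op A n)
    (hf : ∀ s : Fin lam, ¬ Function.Surjective (fun x : Fin n → A => φ (f x) s)) :
    f ∈ Pol ρ n := by
  show Preserves f ρ
  intro M hM
  rw [mem_rho φ hρ]
  intro s
  by_contra hc
  push_neg at hc
  refine hf s (fun b => ?_)
  have hinj : Function.Injective (fun j : Fin h => φ (f (fun i => M i j)) s) := by
    intro a b hab
    by_contra hne
    exact hc a b hne hab
  obtain ⟨j, hj⟩ := Finite.injective_iff_surjective.mp hinj b
  exact ⟨fun i => M i j, hj⟩

/-- `Pol` of an `h`-regularly generated relation (`3 ≤ h ≤ |A|`) is a maximal clone. -/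
theorem regularly_generated_maximal {A : Type*} [Fintype A]
    (h : ℕ) (ρ : Set (Fin h → A)) (hr : IsRegularlyGenerated ρ) :
    IsMaximalClone (Pol ρ) := by
  classical
  obtain ⟨hh3, _hcard, lam, hlam, φ, hφ, hρ⟩ := hr
  have h0 : 0 < h := by omega
  have h1 : 1 < h := by omega
  have h2 : 2 < h := by omega
  have hlam0 : 0 < lam := by omega
  set pick0 : (Fin lam → Fin h) → A := Function.surjInv hφ with hpick0def
  have hpick0 : ∀ c, φ (pick0 c) = c := fun c => Function.surjInv_eq hφ c
  set pick : Fin h → A := fun b => pick0 (fun _ => b) with hpickdef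
  have hpick : ∀ b s, φ (pick b) s = b := by
    intro b s
    show φ (pick0 fun _ => b) s = b
    rw [hpick0]
  have pickinj : Function.Injective pick := by
    intro a b hab
    have ha := hpick a ⟨0, hlam0⟩
    rw [hab, hpick] at ha
    exact ha.symm
  have hne01 : (⟨0, h0⟩ : Fin h) ≠ ⟨1, h1⟩ := by
    simp only [ne_eq, Fin.mk.injEq]; omega
  have hne02 : (⟨0, h0⟩ : Fin h) ≠ ⟨2, h2⟩ := by
    simp only [ne_eq, Fin.mk.injEq]; omega
  have hne12 : (⟨1, h1⟩ : Fin h) ≠ ⟨2, h2⟩ := by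
    simp only [ne_eq, Fin.mk.injEq]; omega
  refine ⟨pol_isClone ρ, ?_, ?_⟩
  · -- Pol ρ is proper
    intro hEq
    set colM : Fin h → Fin h → A := fun j i => if i = j then pick j else pick ⟨0, h0⟩ with hcolM
    have hcol_self : ∀ j, colM j j = pick j := by
      intro j; simp only [hcolM, if_pos rfl]
    have hcol_ne : ∀ j i, i ≠ j → colM j i = pick ⟨0, h0⟩ := by
      intro j i hij; simp only [hcolM, if_neg hij]
    have hcol_inj : Function.Injective colM := by
      intro a b hab
      by_contra hne
      have e1 := congrFun hab a
      rw [hcol_self, hcol_ne b a hne] at e1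
      have e2 := congrFun hab b
      rw [hcol_ne a b (Ne.symm hne), hcol_self] at e2
      exact hne ((pickinj e1).trans (pickinj e2))
    set fbad : Op A h := fun x => if H : ∃ j, x = colM j then pick H.choose else pick ⟨0, h0⟩
      with hfbad
    have hfbad_col : ∀ j, fbad (colM j) = pick j := by
      intro j
      have H : ∃ j', colM j = colM j' := ⟨j, rfl⟩
      simp only [hfbad]
      rw [dif_pos H]
      exact congrArg pick (hcol_inj H.choose_spec).symm
    have hfP : Preserves fbad ρ := by
      have hmem : fbad ∈ Pol ρ h := by rw [hEq]; exact Set.mem_univ _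
      exact hmem
    have hrowmem : ∀ i : Fin h, (fun j => colM j i) ∈ ρ := by
      intro i
      rw [mem_rho φ hρ]
      intro s
      have hpq : ∃ p q : Fin h, p ≠ q ∧ p ≠ i ∧ q ≠ i := by
        by_cases hi0 : i = ⟨0, h0⟩
        · subst hi0
          exact ⟨⟨1, h1⟩, ⟨2, h2⟩, hne12, Ne.symm hne01, Ne.symm hne02⟩
        · by_cases hi1 : i = ⟨1, h1⟩
          · subst hi1
            exact ⟨⟨0, h0⟩, ⟨2, h2⟩, hne02, hne01, Ne.symm hne12⟩
          · exact ⟨⟨0, h0⟩, ⟨1, h1⟩, hne01, fun hc => hi0 hc.symm, fun hc => hi1 hc.symm⟩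
      obtain ⟨p, q, hpq, hpi, hqi⟩ := hpq
      refine ⟨p, q, hpq, ?_⟩
      show φ (colM p i) s = φ (colM q i) s
      rw [hcol_ne p i (Ne.symm hpi), hcol_ne q i (Ne.symm hqi)]
    have hviol := hfP (fun i j => colM j i) hrowmem
    rw [mem_rho φ hρ] at hviol
    obtain ⟨a, b, hab, heq⟩ := hviol ⟨0, hlam0⟩
    have heq' : φ (fbad (colM a)) ⟨0, hlam0⟩ = φ (fbad (colM b)) ⟨0, hlam0⟩ := heq
    rw [hfbad_col, hfbad_col, hpick, hpick] at heq'
    exact hab heq'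
  · -- maximality
    intro D hD hsub
    by_cases hall : ∀ n, ∀ f ∈ D n, Preserves f ρ
    · left
      funext n
      exact Set.Subset.antisymm (fun f hf => hall n f hf) (hsub n)
    right
    push_neg at hall
    obtain ⟨n₀, f₀, hf₀D, hf₀⟩ := hall
    unfold Preserves at hf₀
    push_neg at hf₀
    obtain ⟨Mv, hMvrows, hout⟩ := hf₀
    rw [mem_rho φ hρ] at hout
    push_neg at hout
    obtain ⟨r₀, hr₀⟩ := hout
    set w : Fin h → A := fun j => f₀ (fun i => Mv i j) with hw
    have hr₀' : ∀ i j : Fin h, i ≠ j → φ (w i) r₀ ≠ φ (w j) r₀ := hr₀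
    have hbij_inj : Function.Injective (fun j : Fin h => φ (w j) r₀) := by
      intro a b hab
      by_contra hne
      exact hr₀' a b hne hab
    set β : Fin h ≃ Fin h :=
      Equiv.ofBijective _ (Finite.injective_iff_bijective.mp hbij_inj) with hβ
    have hβ_apply : ∀ j, β j = φ (w j) r₀ := fun j => rfl
    have hrow : ∀ (i : Fin n₀) (s : Fin lam),
        ∃ p q : Fin h, p ≠ q ∧ φ (Mv i p) s = φ (Mv i q) s := by
      intro i s
      exact (mem_rho φ hρ _).mp (hMvrows i) s
    -- operations with values inside one row of the violating matrix preserve ρ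
    have hmem_row : ∀ {n : ℕ} (F : Op A n) (i : Fin n₀),
        (∀ x, ∃ j, F x = Mv i j) → F ∈ Pol ρ n := by
      intro n F i hF
      refine polN φ hρ F (fun s hsurj => ?_)
      have hsurj' : Function.Surjective (fun j : Fin h => φ (Mv i j) s) := by
        intro b
        obtain ⟨x, hx⟩ := hsurj b
        obtain ⟨j, hj⟩ := hF x
        refine ⟨j, ?_⟩
        show φ (Mv i j) s = b
        rw [← hj]
        exact hx
      have hinj := Finite.injective_iff_surjective.mpr hsurj'
      obtain ⟨p, q, hpq, heq⟩ := hrow i s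
      exact hpq (hinj heq)
    set qpat : Fin h → Fin h → Fin h :=
      fun k t => if t = k then ⟨1, h1⟩ else ⟨0, h0⟩ with hqpat
    have hqpat_inj : ∀ k k', qpat k = qpat k' → k = k' := by
      intro k k' hkk
      by_contra hne
      have e1 := congrFun hkk k
      simp only [hqpat, if_pos rfl, if_neg hne] at e1
      exact hne01 e1.symm
    set P : (Fin h → A) → Prop := fun y => ∃ k, (fun t => φ (y t) r₀) = qpat k with hP
    set u : Fin n₀ → Op A h :=
      fun i y => if H : P y then Mv i (β.symm H.choose) else Mv i ⟨0, h0⟩ with hu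
    have hu_val : ∀ i y, ∃ j, u i y = Mv i j := by
      intro i y
      by_cases H : P y
      · exact ⟨β.symm H.choose, by simp only [hu]; rw [dif_pos H]⟩
      · exact ⟨⟨0, h0⟩, by simp only [hu]; rw [dif_neg H]⟩
    have hu_pos : ∀ i y (H : P y), u i y = Mv i (β.symm H.choose) := by
      intro i y H
      simp only [hu]
      rw [dif_pos H]
    -- key lemma: for any target τ there is e ∈ D with φ (e x) s = τ x for all s
    have hE : ∀ {n : ℕ} (τ : (Fin n → A) → Fin h),
        ∃ e : Op A n, e ∈ D n ∧ ∀ x s, φ (e x) s = τ x := by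
      intro n τ
      set c1 : Fin h → Op A n :=
        fun k x => pick (if k = τ x then ⟨1, h1⟩ else ⟨0, h0⟩) with hc1
      have hc1P : ∀ k, c1 k ∈ Pol ρ n := by
        intro k
        refine polN φ hρ _ (fun s hsurj => ?_)
        obtain ⟨x, hx⟩ := hsurj ⟨2, h2⟩
        have hx' : φ (c1 k x) s = ⟨2, h2⟩ := hx
        simp only [hc1] at hx'
        rw [hpick] at hx'
        by_cases hk : k = τ x
        · rw [if_pos hk] at hx'
          exact hne12 hx'
        · rw [if_neg hk] at hx'
          exact hne02 hx'
      set F1 : Op A n := fun x => f₀ (fun i => u i (fun k => c1 k x)) with hF1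
      have hF1D : F1 ∈ D n := by
        have hargs : ∀ i, (fun x : Fin n → A => u i (fun k => c1 k x)) ∈ D n := by
          intro i
          refine hsub n (hmem_row _ i ?_)
          intro x
          exact hu_val i _
        exact hD.2 n₀ n f₀ (fun i x => u i (fun k => c1 k x)) hf₀D hargs
      have hpat : ∀ x, (fun t => φ ((fun k => c1 k x) t) r₀) = qpat (τ x) := by
        intro x
        funext t
        show φ (c1 t x) r₀ = qpat (τ x) t
        simp only [hc1, hqpat]
        rw [hpick]
      have hF1val : ∀ x, φ (F1 x) r₀ = τ x := by
        intro x
        have HP : P (fun k => c1 k x) := ⟨τ x, hpat x⟩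
        have hch : HP.choose = τ x := by
          have hspec := HP.choose_spec
          exact (hqpat_inj _ _ ((hpat x).symm.trans hspec)).symm
        have hF1x : F1 x = w (β.symm (τ x)) := by
          simp only [hF1, hw]
          congr 1
          funext i
          rw [hu_pos i _ HP, hch]
        rw [hF1x, ← hβ_apply, Equiv.apply_symm_apply]
      refine ⟨fun x => pick (φ (F1 x) r₀), ?_, ?_⟩
      · have htOp : (fun v : Fin 1 → A => pick (φ (v 0) r₀)) ∈ Pol ρ 1 := by
          show Preserves (fun v : Fin 1 → A => pick (φ (v 0) r₀)) ρ
          intro M hM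
          rw [mem_rho φ hρ]
          intro s
          obtain ⟨p, q, hpq, heq⟩ := (mem_rho φ hρ _).mp (hM 0) r₀
          refine ⟨p, q, hpq, ?_⟩
          show φ (pick (φ (M 0 p) r₀)) s = φ (pick (φ (M 0 q) r₀)) s
          rw [hpick, hpick]
          exact heq
        exact hD.2 1 n _ (fun _ => F1) (hsub 1 htOp) (fun _ => hF1D)
      · intro x s
        rw [hpick]
        exact hF1val x
    -- final assembly: D contains every operation
    funext n
    ext g
    simp only [Set.mem_univ, iff_true]
    choose e heD heφ using fun r : Fin lam => hE (fun x : Fin n → A => φ (g x) r)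
    set K := Fintype.card (Fin lam → Fin h) with hK
    set C : Fin K ≃ (Fin lam → Fin h) := (Fintype.equivFin (Fin lam → Fin h)).symm with hC
    set mOp : Fin K → Op A n :=
      fun i x => if φ (g x) = C i then g x else pick0 (C i) with hmOp
    have hm_phi : ∀ i x, φ (mOp i x) = C i := by
      intro i x
      simp only [hmOp]
      split
      · next hc => exact hc
      · exact hpick0 _
    have hmPol : ∀ i, mOp i ∈ Pol ρ n := by
      intro i
      refine polN φ hρ _ (fun s hsurj => ?_)
      by_cases hc : C i s = ⟨0, h0⟩
      · obtain ⟨x, hx⟩ := hsurj ⟨1, h1⟩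
        have hx' : φ (mOp i x) s = ⟨1, h1⟩ := hx
        rw [hm_phi, hc] at hx'
        exact hne01 hx'
      · obtain ⟨x, hx⟩ := hsurj ⟨0, h0⟩
        have hx' : φ (mOp i x) s = ⟨0, h0⟩ := hx
        rw [hm_phi] at hx'
        exact hc hx'
    set ROp : Op A (lam + K) := fun v =>
      if H : ∃ i : Fin K, φ (v (Fin.natAdd lam i)) = (fun r => φ (v (Fin.castAdd K r)) r)
      then v (Fin.natAdd lam H.choose)
      else pick0 (fun r => φ (v (Fin.castAdd K r)) r) with hROp
    have hRkey : ∀ (v : Fin (lam + K) → A) (s : Fin lam),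
        φ (ROp v) s = φ (v (Fin.castAdd K s)) s := by
      intro v s
      simp only [hROp]
      split
      · next H => exact congrFun H.choose_spec s
      · rw [hpick0]
    have hRPol : ROp ∈ Pol ρ (lam + K) := by
      show Preserves ROp ρ
      intro M hM
      rw [mem_rho φ hρ]
      intro s
      obtain ⟨p, q, hpq, heq⟩ := (mem_rho φ hρ _).mp (hM (Fin.castAdd K s)) s
      refine ⟨p, q, hpq, ?_⟩
      show φ (ROp (fun idx => M idx p)) s = φ (ROp (fun idx => M idx q)) s
      exact (hRkey (fun idx => M idx p) s).trans
        (heq.trans (hRkey (fun idx => M idx q) s).symm)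
    set args : Fin (lam + K) → Op A n :=
      fun j => Fin.addCases (motive := fun _ => Op A n) e mOp j with hargs
    have hargsD : ∀ j, args j ∈ D n := by
      intro j
      refine Fin.addCases (motive := fun j => args j ∈ D n) ?_ ?_ j
      · intro r
        simp only [hargs]
        rw [Fin.addCases_left]
        exact heD r
      · intro i
        simp only [hargs]
        rw [Fin.addCases_right]
        exact hsub n (hmPol i)
    have hfinalD := hD.2 (lam + K) n ROp args (hsub _ hRPol) hargsD
    have hfinal_eq : (fun v : Fin n → A => ROp (fun j => args j v)) = g := by
      funext x
      set y : Fin (lam + K) → A := fun j => args j x with hy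
      have hyL : ∀ r, y (Fin.castAdd K r) = e r x := by
        intro r
        simp only [hy, hargs]
        rw [Fin.addCases_left]
      have hyR : ∀ i, y (Fin.natAdd lam i) = mOp i x := by
        intro i
        simp only [hy, hargs]
        rw [Fin.addCases_right]
      have htvec : (fun r => φ (y (Fin.castAdd K r)) r) = φ (g x) := by
        funext r
        rw [hyL r]
        exact heφ r x r
      have Hex : ∃ i : Fin K,
          φ (y (Fin.natAdd lam i)) = (fun r => φ (y (Fin.castAdd K r)) r) := by
        refine ⟨C.symm (φ (g x)), ?_⟩
        rw [hyR, hm_phi, htvec, Equiv.apply_symm_apply]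
      have hch : Hex.choose = C.symm (φ (g x)) := by
        have hspec := Hex.choose_spec
        have e1 : φ (y (Fin.natAdd lam Hex.choose)) = C Hex.choose := by
          rw [hyR, hm_phi]
        have h1 : C Hex.choose = φ (g x) := e1.symm.trans (hspec.trans htvec)
        have := congrArg C.symm h1
        rwa [Equiv.symm_apply_apply] at this
      show ROp y = g x
      simp only [hROp]
      rw [dif_pos Hex, hch, hyR]
      simp only [hmOp]
      rw [if_pos (Equiv.apply_symm_apply C _).symm]
    rw [← hfinal_eq]
    exact hfinalD
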